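/- Under the slow cooling regime (R1) with $T_k\sim \beta B k^{\beta-1}$, $B>0$, $\beta>1$, define $\chi_n(\tau)=(\sigma_\mu^2\sigma_V)^2((\beta-1)/\beta)^4 (n/B)^{1/\beta}(\log n)^4$. If $\mathrm{Var}(Y_j)\sim (\sigma_\mu^2\sigma_V)^2 (\log T_j)^4$ as $j\to\infty$, then for fixed $0<t<s\le 1$, $\sum_{j=k(\lfloor tn\rfloor)+2}^{k(\lfloor sn\rfloor)}\mathrm{Var}(Y_j) \sim \chi_n(\tau)\,(s^{1/\beta}-t^{1/\beta})$ as $n\to\infty$. -/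

import Mathlib

open Filter

/-!
Since `log T_j ~ (β - 1) log j`, the variances satisfy `V_j ~ σ (β - 1)^4 (log j)^4`, and asymptotic
equivalence of nonnegative terms passes to sums over windows whose left end tends to infinity.
Both ends of the window `[k(⌊tn⌋) + 2, k(⌊sn⌋)]` are of order `(n/B)^(1/β)`, so on it `log j` is
squeezed between two quantities asymptotic to `(log n)/β`, while the window contains
`(s^(1/β) - t^(1/β)) (n/B)^(1/β) (1 + o(1))` indices.
-/

open Asymptotics Finset Topology

section

variable {α : Type*} {l : Filter α}

theorem isEquivalent_sum_Icc {u v : ℕ → ℝ} {a b : α → ℕ} (huv : u ~[atTop] v)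
    (hv : ∀ᶠ j in atTop, 0 ≤ v j) (ha : Tendsto a l atTop) :
    (fun x ↦ ∑ j ∈ Icc (a x) (b x), u j) ~[l] fun x ↦ ∑ j ∈ Icc (a x) (b x), v j := by
  refine IsLittleO.isEquivalent (isLittleO_iff.2 fun ε hε ↦ ?_)
  obtain ⟨N, hN⟩ := eventually_atTop.1 ((isLittleO_iff.1 huv.isLittleO hε).and hv)
  filter_upwards [ha.eventually_ge_atTop N] with x hx
  have hN' : ∀ j ∈ Icc (a x) (b x), ‖u j - v j‖ ≤ ε * ‖v j‖ ∧ 0 ≤ v j :=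
    fun j hj ↦ hN j (hx.trans (mem_Icc.1 hj).1)
  calc ‖(∑ j ∈ Icc (a x) (b x), u j) - ∑ j ∈ Icc (a x) (b x), v j‖
      = ‖∑ j ∈ Icc (a x) (b x), (u j - v j)‖ := by rw [sum_sub_distrib]
    _ ≤ ∑ j ∈ Icc (a x) (b x), ε * v j :=
      norm_sum_le_of_le _ fun j hj ↦ by simpa [abs_of_nonneg (hN' j hj).2] using (hN' j hj).1
    _ = ε * ‖∑ j ∈ Icc (a x) (b x), v j‖ := by
      rw [← mul_sum, Real.norm_of_nonneg (sum_nonneg fun j hj ↦ (hN' j hj).2)]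

theorem isEquivalent_sum_Icc_of_monotone {f : ℕ → ℝ} (hf : Monotone f) {a b : α → ℕ} {g : α → ℝ}
    (hab : ∀ᶠ x in l, a x ≤ b x) (hg : ∀ᶠ x in l, 0 < g x)
    (ha : (fun x ↦ f (a x)) ~[l] g) (hb : (fun x ↦ f (b x)) ~[l] g) :
    (fun x ↦ ∑ j ∈ Icc (a x) (b x), f j) ~[l] fun x ↦ (#(Icc (a x) (b x)) : ℝ) * g x := by
  have hg0 : ∀ᶠ x in l, g x ≠ 0 := hg.mono fun x hx ↦ hx.ne'
  rw [isEquivalent_iff_tendsto_one hg0] at ha hb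
  refine isEquivalent_of_tendsto_one (tendsto_of_tendsto_of_tendsto_of_le_of_le' ha hb ?_ ?_)
  all_goals
    filter_upwards [hab, hg] with x hab hg
    have hcard : (0 : ℝ) < #(Icc (a x) (b x)) := by simpa using hab
    simp only [Pi.div_apply]
    rw [← mul_div_mul_left _ (g x) hcard.ne']
    gcongr
  · simpa using card_nsmul_le_sum _ _ _ fun j hj ↦ hf (mem_Icc.1 hj).1
  · simpa using sum_le_card_nsmul _ _ _ fun j hj ↦ hf (mem_Icc.1 hj).2

theorem Asymptotics.IsEquivalent.log_of_const_mul_rpow {u v : α → ℝ} {C p : ℝ}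
    (h : u ~[l] fun x ↦ C * v x ^ p) (hC : 0 < C) (hp : 0 < p) (hv : Tendsto v l atTop) :
    (fun x ↦ Real.log (u x)) ~[l] fun x ↦ p * Real.log (v x) := by
  have hCv : Tendsto (fun x ↦ C * v x ^ p) l atTop :=
    ((tendsto_rpow_atTop hp).comp hv).const_mul_atTop hC
  have hlog : (fun x ↦ Real.log (C * v x ^ p)) =ᶠ[l] fun x ↦ Real.log C + p * Real.log (v x) := by
    filter_upwards [hv.eventually_gt_atTop 0] with x hx
    rw [Real.log_mul hC.ne' (Real.rpow_pos_of_pos hx p).ne', Real.log_rpow hx]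
  refine (h.log hCv).trans (hlog.isEquivalent.trans ?_)
  exact IsEquivalent.refl.const_add_of_norm_tendsto_atTop
    (tendsto_norm_atTop_atTop.comp ((Real.tendsto_log_atTop.comp hv).const_mul_atTop hp))

theorem eventually_le_of_tendsto_div {a b : α → ℕ} {r : α → ℝ} {A A' : ℝ}
    (hr : ∀ᶠ x in l, 0 < r x) (ha : Tendsto (fun x ↦ (a x : ℝ) / r x) l (𝓝 A))
    (hb : Tendsto (fun x ↦ (b x : ℝ) / r x) l (𝓝 A')) (hAA' : A < A') :
    ∀ᶠ x in l, a x ≤ b x := by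
  filter_upwards [(hb.sub ha).eventually_const_lt (sub_pos.2 hAA'), hr] with x hx hrx
  rw [← sub_div, div_pos_iff_of_pos_right hrx, sub_pos] at hx
  exact_mod_cast hx.le

theorem isEquivalent_card_Icc {a b : α → ℕ} {r : α → ℝ} {A A' : ℝ} (hr : Tendsto r l atTop)
    (ha : Tendsto (fun x ↦ (a x : ℝ) / r x) l (𝓝 A))
    (hb : Tendsto (fun x ↦ (b x : ℝ) / r x) l (𝓝 A')) (hAA' : A < A') :
    (fun x ↦ (#(Icc (a x) (b x)) : ℝ)) ~[l] fun x ↦ (A' - A) * r x := by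
  have hr0 := hr.eventually_gt_atTop 0
  have hlim : Tendsto (fun x ↦ ((b x : ℝ) / r x - a x / r x + 1 / r x) / (A' - A)) l (𝓝 1) := by
    simpa only [add_zero, div_self (sub_pos.2 hAA').ne'] using
      ((hb.sub ha).add (tendsto_const_nhds (x := (1 : ℝ)).div_atTop hr)).div_const (A' - A)
  refine isEquivalent_of_tendsto_one (hlim.congr' ?_)
  filter_upwards [eventually_le_of_tendsto_div hr0 ha hb hAA', hr0] with x hab hrx
  simp only [Pi.div_apply]
  rw [Nat.card_Icc, Nat.cast_sub (by omega)]
  field_simp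
  push_cast
  ring

end

theorem tendsto_natCast_div_rpow_atTop {B q : ℝ} (hB : 0 < B) (hq : 0 < q) :
    Tendsto (fun n : ℕ ↦ ((n : ℝ) / B) ^ q) atTop atTop :=
  (tendsto_rpow_atTop hq).comp (tendsto_natCast_atTop_atTop.atTop_div_const hB)

theorem tendsto_comp_floor_mul_div_rpow {k : ℕ → ℝ} {B q x : ℝ} (hB : 0 < B) (hx : 0 < x)
    (hk : Tendsto (fun m : ℕ ↦ k m / ((m : ℝ) / B) ^ q) atTop (𝓝 1)) :
    Tendsto (fun n : ℕ ↦ k ⌊x * n⌋₊ / ((n : ℝ) / B) ^ q) atTop (𝓝 (x ^ q)) := by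
  have hfloor : Tendsto (fun n : ℕ ↦ ⌊x * n⌋₊) atTop atTop :=
    tendsto_nat_floor_atTop.comp (tendsto_natCast_atTop_atTop.const_mul_atTop hx)
  have hratio : Tendsto (fun n : ℕ ↦ ((⌊x * n⌋₊ : ℝ) / n) ^ q) atTop (𝓝 (x ^ q)) :=
    ((Real.continuousAt_rpow_const x q (Or.inl hx.ne')).tendsto).comp
      ((tendsto_nat_floor_mul_div_atTop hx.le).comp tendsto_natCast_atTop_atTop)
  refine (one_mul (x ^ q) ▸ (hk.comp hfloor).mul hratio).congr' ?_
  filter_upwards [eventually_gt_atTop 0, hfloor.eventually_gt_atTop 0] with n hn hm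
  have hm' : (0 : ℝ) < ⌊x * n⌋₊ := by exact_mod_cast hm
  have hn' : (0 : ℝ) < n := by exact_mod_cast hn
  simp only [Function.comp_apply]
  rw [Real.div_rpow hm'.le hB.le, Real.div_rpow hm'.le hn'.le, Real.div_rpow hn'.le hB.le]
  have : (0 : ℝ) < (⌊x * n⌋₊ : ℝ) ^ q := Real.rpow_pos_of_pos hm' q
  have : (0 : ℝ) < (n : ℝ) ^ q := Real.rpow_pos_of_pos hn' q
  have : (0 : ℝ) < B ^ q := Real.rpow_pos_of_pos hB q
  field_simp

theorem monotone_log_natCast_pow (m : ℕ) : Monotone fun j : ℕ ↦ Real.log j ^ m := by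
  intro i j hij
  refine pow_le_pow_left₀ (Real.log_natCast_nonneg i) ?_ m
  rcases i.eq_zero_or_pos with rfl | hi
  · simpa using Real.log_natCast_nonneg j
  · exact Real.log_le_log (by exact_mod_cast hi) (by exact_mod_cast hij)

theorem isEquivalent_const_mul_log_pow {T V : ℕ → ℝ} {C p σ : ℝ} (hC : 0 < C) (hp : 0 < p)
    {m : ℕ} (hT : Tendsto (fun j : ℕ ↦ T j / (C * (j : ℝ) ^ p)) atTop (𝓝 1))
    (hV : Tendsto (fun j : ℕ ↦ V j / (σ * Real.log (T j) ^ m)) atTop (𝓝 1)) :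
    V ~[atTop] fun j ↦ σ * p ^ m * Real.log j ^ m := by
  have hlogT := ((isEquivalent_of_tendsto_one hT).log_of_const_mul_rpow hC hp
    tendsto_natCast_atTop_atTop).pow m
  have hform : (fun j : ℕ ↦ σ * p ^ m * Real.log j ^ m) =
      (fun _ ↦ σ) * (fun j : ℕ ↦ p * Real.log j) ^ m := by
    funext j
    simp only [Pi.mul_apply, Pi.pow_apply, mul_pow, mul_assoc]
  rw [hform]
  exact (isEquivalent_of_tendsto_one hV).trans (IsEquivalent.refl.mul hlogT)

theorem isEquivalent_sum_Icc_log_pow {a b : ℕ → ℕ} {B q A A' : ℝ} (hB : 0 < B) (hq : 0 < q)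
    (hA : 0 < A) (hAA' : A < A')
    (ha : Tendsto (fun n : ℕ ↦ (a n : ℝ) / ((n : ℝ) / B) ^ q) atTop (𝓝 A))
    (hb : Tendsto (fun n : ℕ ↦ (b n : ℝ) / ((n : ℝ) / B) ^ q) atTop (𝓝 A')) (m : ℕ) :
    (fun n ↦ ∑ j ∈ Icc (a n) (b n), Real.log j ^ m) ~[atTop]
      fun n : ℕ ↦ (A' - A) * ((n : ℝ) / B) ^ q * (q * Real.log n) ^ m := by
  have hr := tendsto_natCast_div_rpow_atTop hB hq
  have hlog : ∀ {u : ℕ → ℕ} {L : ℝ}, 0 < L →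
      Tendsto (fun n : ℕ ↦ (u n : ℝ) / ((n : ℝ) / B) ^ q) atTop (𝓝 L) →
      (fun n ↦ Real.log (u n) ^ m) ~[atTop] fun n ↦ (q * Real.log n) ^ m := by
    intro u L hL hu
    have hequiv : (fun n ↦ (u n : ℝ)) ~[atTop] fun n : ℕ ↦ L / B ^ q * (n : ℝ) ^ q := by
      refine isEquivalent_of_tendsto_one ((div_self hL.ne' ▸ hu.div_const L).congr' ?_)
      filter_upwards with n
      simp only [Pi.div_apply]
      rw [Real.div_rpow (Nat.cast_nonneg n) hB.le]
      field_simp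
    exact (hequiv.log_of_const_mul_rpow (by positivity) hq tendsto_natCast_atTop_atTop).pow m
  have hg : ∀ᶠ n : ℕ in atTop, 0 < (q * Real.log n) ^ m := by
    filter_upwards [eventually_ge_atTop 2] with n hn
    have : 0 < Real.log n := Real.log_pos (by exact_mod_cast hn)
    positivity
  have hab := eventually_le_of_tendsto_div (hr.eventually_gt_atTop 0) ha hb hAA'
  exact (isEquivalent_sum_Icc_of_monotone (monotone_log_natCast_pow m) hab hg (hlog hA ha)
    (hlog (hA.trans hAA') hb)).trans ((isEquivalent_card_Icc hr ha hb hAA').mul IsEquivalent.refl)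

theorem isEquivalent_sum_Icc_of_isEquivalent_log_pow {u : ℕ → ℝ} {c : ℝ} {m : ℕ} (hc : 0 ≤ c)
    (hu : u ~[atTop] fun j ↦ c * Real.log j ^ m) {a b : ℕ → ℕ} {B q A A' : ℝ} (hB : 0 < B)
    (hq : 0 < q) (hA : 0 < A) (hAA' : A < A')
    (ha : Tendsto (fun n : ℕ ↦ (a n : ℝ) / ((n : ℝ) / B) ^ q) atTop (𝓝 A))
    (hb : Tendsto (fun n : ℕ ↦ (b n : ℝ) / ((n : ℝ) / B) ^ q) atTop (𝓝 A')) :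
    (fun n ↦ ∑ j ∈ Icc (a n) (b n), u j) ~[atTop]
      fun n : ℕ ↦ c * ((A' - A) * ((n : ℝ) / B) ^ q * (q * Real.log n) ^ m) := by
  have hr := tendsto_natCast_div_rpow_atTop hB hq
  have ha_top : Tendsto a atTop atTop := by
    refine tendsto_natCast_atTop_iff.1 ((ha.pos_mul_atTop hA hr).congr' ?_)
    filter_upwards [hr.eventually_gt_atTop 0] with n hn
    exact div_mul_cancel₀ _ hn.ne'
  have hsum := isEquivalent_sum_Icc (b := b) hu
    (Eventually.of_forall fun j ↦ mul_nonneg hc (pow_nonneg (Real.log_natCast_nonneg j) m)) ha_top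
  simp only [← mul_sum] at hsum
  exact hsum.trans (IsEquivalent.refl.mul (isEquivalent_sum_Icc_log_pow hB hq hA hAA' ha hb m))

theorem slow_cooling_variance_sum_asymptotics_general
    (B β σ : ℝ) (hB : 0 < B) (hβ : 1 < β) (hσ : 0 < σ)
    (T : ℕ → ℕ)
    (hT : Tendsto (fun j : ℕ => ((T j : ℝ)) / (β * B * (j : ℝ) ^ (β - 1))) atTop (nhds 1))
    (k : ℕ → ℕ)
    (hk : Tendsto (fun n : ℕ => ((k n : ℝ)) / (((n : ℝ) / B) ^ (1 / β))) atTop (nhds 1))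
    (V : ℕ → ℝ)
    (hV : Tendsto (fun j : ℕ => V j / (σ * (Real.log (T j : ℝ)) ^ 4)) atTop (nhds 1))
    (χ : ℕ → ℝ)
    (hχ : ∀ n : ℕ, χ n = σ * ((β - 1) / β) ^ 4 * ((n : ℝ) / B) ^ (1 / β) * (Real.log n) ^ 4)
    (t s : ℝ) (ht : 0 < t) (hts : t < s) :
    Tendsto
      (fun n : ℕ =>
        (∑ j ∈ Finset.Icc (k ⌊t * (n : ℝ)⌋₊ + 2) (k ⌊s * (n : ℝ)⌋₊), V j) /
          (χ n * (s ^ (1 / β) - t ^ (1 / β))))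
      atTop (nhds 1) := by
  have hβ0 : 0 < β - 1 := sub_pos.2 hβ
  have hq : 0 < 1 / β := one_div_pos.2 (by linarith)
  have hts' : t ^ (1 / β) < s ^ (1 / β) := Real.rpow_lt_rpow ht.le hts hq
  have hk' (x : ℝ) (hx : 0 < x) := tendsto_comp_floor_mul_div_rpow (k := fun m ↦ (k m : ℝ)) hB hx hk
  have ha : Tendsto (fun n : ℕ ↦ ((k ⌊t * n⌋₊ + 2 : ℕ) : ℝ) / ((n : ℝ) / B) ^ (1 / β)) atTop
      (𝓝 (t ^ (1 / β))) := by
    simpa only [add_zero, Nat.cast_add, Nat.cast_ofNat, add_div] using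
      (hk' t ht).add (tendsto_const_nhds.div_atTop (tendsto_natCast_div_rpow_atTop hB hq))
  have hsum := isEquivalent_sum_Icc_of_isEquivalent_log_pow (by positivity)
    (isEquivalent_const_mul_log_pow (by positivity) hβ0 hT hV) hB hq
    (Real.rpow_pos_of_pos ht _) hts' ha (hk' s (ht.trans hts))
  have hχc : ∀ n : ℕ, σ * (β - 1) ^ 4 * ((s ^ (1 / β) - t ^ (1 / β)) * ((n : ℝ) / B) ^ (1 / β) *
      (1 / β * Real.log n) ^ 4) = χ n * (s ^ (1 / β) - t ^ (1 / β)) := fun n ↦ by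
    rw [hχ]; ring
  simp only [hχc] at hsum
  refine (isEquivalent_iff_tendsto_one ?_).1 hsum
  filter_upwards [eventually_ge_atTop 2] with n hn
  have hlog : 0 < Real.log n := Real.log_pos (by exact_mod_cast hn)
  have hc : 0 < s ^ (1 / β) - t ^ (1 / β) := sub_pos.2 hts'
  rw [hχ]
  positivity

/-- Slow cooling variance sum asymptotics: if `Var(Y_j) ~ σ (log T_j)^4` with
`σ = (σ_μ² σ_V)²` and `T_j ~ β B j^(β-1)`, `k(n) ~ (n/B)^(1/β)`, then for `0 < t < s ≤ 1`,
`∑_{j=k(⌊tn⌋)+2}^{k(⌊sn⌋)} Var(Y_j) ~ χ_n(τ) (s^(1/β) - t^(1/β))` where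
`χ_n(τ) = σ ((β-1)/β)^4 (n/B)^(1/β) (log n)^4`. -/
theorem slow_cooling_variance_sum_asymptotics
    (B β σ : ℝ) (hB : 0 < B) (hβ : 1 < β) (hσ : 0 < σ)
    (T : ℕ → ℕ)
    (hT : Tendsto (fun j : ℕ => ((T j : ℝ)) / (β * B * (j : ℝ) ^ (β - 1))) atTop (nhds 1))
    (k : ℕ → ℕ)
    (hk : Tendsto (fun n : ℕ => ((k n : ℝ)) / (((n : ℝ) / B) ^ (1 / β))) atTop (nhds 1))
    (V : ℕ → ℝ)
    (hV : Tendsto (fun j : ℕ => V j / (σ * (Real.log (T j : ℝ)) ^ 4)) atTop (nhds 1))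
    (χ : ℕ → ℝ)
    (hχ : ∀ n : ℕ, χ n = σ * ((β - 1) / β) ^ 4 * ((n : ℝ) / B) ^ (1 / β) * (Real.log n) ^ 4)
    (t s : ℝ) (ht : 0 < t) (hts : t < s) (hs : s ≤ 1) :
    Tendsto
      (fun n : ℕ =>
        (∑ j ∈ Finset.Icc (k ⌊t * (n : ℝ)⌋₊ + 2) (k ⌊s * (n : ℝ)⌋₊), V j) /
          (χ n * (s ^ (1 / β) - t ^ (1 / β))))
      atTop (nhds 1) :=
  slow_cooling_variance_sum_asymptotics_general B β σ hB hβ hσ T hT k hk V hV χ hχ t s ht hts
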